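/- Let E be a finite-dimensional real normed vector space, U ⊆ E open, and ω a smooth closed 2-form on U. Let X, Y : U → E be smooth vector fields such that for every x ∈ U and every v ∈ E one has ω_x(X(x), v) = 0 and ω_x(Y(x), v) = 0. Then the Lie bracket [X, Y] also takes values in the kernel of ω: for every x ∈ U and v ∈ E, ω_x([X,Y](x), v) = 0. -/

import Mathlib

/-!
Differentiating the identities `ω y (Z y) = 0` (for `Z = X, Y`) and `ω y c c = 0` at `x` expresses
`ω_x(DY(X), v)` and `ω_x(DX(Y), v)` through the derivative `Dω` of `ω`, which is again alternating
in its last two slots. Closedness of `ω` then relates the two terms; the remaining cyclic term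
`Dω(v)(X, Y) = -ω_x(DX(v), Y)` vanishes because `Y` lies in the kernel.
-/

open Filter Topology

section KernelDerivative

variable {𝕜 : Type*} [NontriviallyNormedField 𝕜]
  {E F G H : Type*} [NormedAddCommGroup E] [NormedSpace 𝕜 E] [NormedAddCommGroup F]
  [NormedSpace 𝕜 F] [NormedAddCommGroup G] [NormedSpace 𝕜 G] [NormedAddCommGroup H]
  [NormedSpace 𝕜 H] {x : E}

theorem HasFDerivAt.eq_zero_of_eventuallyEq_const {f : E → H} {f' : E →L[𝕜] H} {c : H}
    (hf : HasFDerivAt f f' x) (hc : f =ᶠ[𝓝 x] fun _ ↦ c) : f' = 0 :=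
  hf.unique ((hasFDerivAt_const c x).congr_of_eventuallyEq hc)

theorem ContinuousLinearMap.apply_swap_of_apply_self (B : F →L[𝕜] F →L[𝕜] G)
    (hB : ∀ c, B c c = 0) (a b : F) : B a b = -B b a :=
  (LinearMap.IsAlt.neg (B := B.toLinearMap₁₂) hB b a).symm

variable {ω : E → F →L[𝕜] F →L[𝕜] G}

theorem fderiv_apply_apply_self_eq_zero (hω : DifferentiableAt 𝕜 ω x)
    (halt : ∀ᶠ y in 𝓝 x, ∀ c, ω y c c = 0) (u : E) (c : F) : fderiv 𝕜 ω x u c c = 0 := by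
  have hderiv := (hω.hasFDerivAt.clm_apply (hasFDerivAt_const c x)).clm_apply
    (hasFDerivAt_const c x)
  have hzero := hderiv.eq_zero_of_eventuallyEq_const (c := 0) (halt.mono fun y hy ↦ hy c)
  simpa using congr($hzero u)

theorem fderiv_apply_add_apply_fderiv_eq_zero (hω : DifferentiableAt 𝕜 ω x) {Z : E → F}
    (hZ : DifferentiableAt 𝕜 Z x) (hker : ∀ᶠ y in 𝓝 x, ω y (Z y) = 0) (u : E) :
    fderiv 𝕜 ω x u (Z x) + ω x (fderiv 𝕜 Z x u) = 0 := by
  have hzero := (hω.hasFDerivAt.clm_apply hZ.hasFDerivAt).eq_zero_of_eventuallyEq_const hker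
  simpa [add_comm] using congr($hzero u)

end KernelDerivative

theorem stmt1 {E : Type*} [NormedAddCommGroup E] [NormedSpace ℝ E]
    (U : Set E) (hU : IsOpen U)
    (ω : E → E →L[ℝ] E →L[ℝ] ℝ)
    (hω : ContDiffOn ℝ (⊤ : ℕ∞) ω U)
    (halt : ∀ x ∈ U, ∀ v, ω x v v = 0)
    (hclosed : ∀ x ∈ U, ∀ u v w,
      fderiv ℝ ω x u v w + fderiv ℝ ω x v w u + fderiv ℝ ω x w u v = 0)
    (X Y : E → E)
    (hX : ContDiffOn ℝ (⊤ : ℕ∞) X U) (hY : ContDiffOn ℝ (⊤ : ℕ∞) Y U)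
    (hXk : ∀ x ∈ U, ∀ v, ω x (X x) v = 0)
    (hYk : ∀ x ∈ U, ∀ v, ω x (Y x) v = 0) :
    ∀ x ∈ U, ∀ v, ω x (fderiv ℝ Y x (X x) - fderiv ℝ X x (Y x)) v = 0 := by
  intro x hx v
  have hUx : U ∈ 𝓝 x := hU.mem_nhds hx
  have hωx := (hω.differentiableOn (by simp)).differentiableAt hUx
  have hXx := (hX.differentiableOn (by simp)).differentiableAt hUx
  have hYx := (hY.differentiableOn (by simp)).differentiableAt hUx
  have hker {Z : E → E} (hZ : DifferentiableAt ℝ Z x) (hZk : ∀ y ∈ U, ∀ v, ω y (Z y) v = 0)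
      (u w : E) : fderiv ℝ ω x u (Z x) w + ω x (fderiv ℝ Z x u) w = 0 := by
    simpa using congr($(fderiv_apply_add_apply_fderiv_eq_zero hωx hZ
      (eventually_of_mem hUx fun y hy ↦ ContinuousLinearMap.ext (hZk y hy)) u) w)
  have hDω_swap : fderiv ℝ ω x (Y x) v (X x) = -fderiv ℝ ω x (Y x) (X x) v :=
    ContinuousLinearMap.apply_swap_of_apply_self _
      (fderiv_apply_apply_self_eq_zero hωx (eventually_of_mem hUx halt) _) _ _
  have hω_swap : ω x (fderiv ℝ X x v) (Y x) = -ω x (Y x) (fderiv ℝ X x v) :=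
    ContinuousLinearMap.apply_swap_of_apply_self _ (halt x hx) _ _
  rw [map_sub, sub_apply]
  linear_combination hker hYx hYk (X x) v - hker hXx hXk (Y x) v + hker hXx hXk v (Y x)
    - hω_swap + hYk x hx (fderiv ℝ X x v) - hclosed x hx (X x) (Y x) v + hDω_swap
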